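/- Let m ≥ 2 be an integer and for 1 ≤ s ≤ m+1 let E_m(s) be the s×s real matrix defined below. Then det E_m(1) = 2m+4, det E_m(2) = 4(m+1)², and for every integer s with 2 ≤ s ≤ m one has the recurrence det E_m(s+1) = (2m+4−3s)·det E_m(s) − 2s(m−s+1)·det E_m(s−1). -/
import Mathlib


/-- The matrix `E_m(s)`, the lower-right `s × s` block of `C_m = A_m - (m-4)·I`:
diagonal entries `2m + 7 - 3s + 3j`, subdiagonal entries `(E)_{j,j-1} = s - j`,
superdiagonal entries `(E)_{j,j+1} = 2(m - s + j + 2)`, all other entries `0`. -/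
noncomputable def paperE (m s : ℕ) : Matrix (Fin s) (Fin s) ℝ :=
  Matrix.of fun j k =>
    if (j : ℕ) = (k : ℕ) then 2 * (m : ℝ) + 7 - 3 * (s : ℝ) + 3 * ((j : ℕ) : ℝ)
    else if (j : ℕ) = (k : ℕ) + 1 then (s : ℝ) - ((j : ℕ) : ℝ)
    else if (k : ℕ) = (j : ℕ) + 1 then 2 * ((m : ℝ) - (s : ℝ) + ((j : ℕ) : ℝ) + 2)
    else 0

lemma val_succAbove {n : ℕ} (p : Fin (n+1)) (i : Fin n) :
    ((p.succAbove i) : ℕ) = if (i:ℕ) < (p:ℕ) then (i:ℕ) else (i:ℕ)+1 := by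
  rw [Fin.succAbove]
  rcases lt_or_ge (i:ℕ) (p:ℕ) with h | h
  · rw [if_pos (by rwa [Fin.lt_def]), if_pos h, Fin.coe_castSucc]
  · rw [if_neg (by rw [Fin.lt_def, Fin.coe_castSucc]; omega), if_neg (by omega), Fin.val_succ]

lemma paperE_apply (m s : ℕ) (j k : Fin s) :
    paperE m s j k =
      if (j : ℕ) = (k : ℕ) then 2 * (m : ℝ) + 7 - 3 * (s : ℝ) + 3 * ((j : ℕ) : ℝ)
      else if (j : ℕ) = (k : ℕ) + 1 then (s : ℝ) - ((j : ℕ) : ℝ)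
      else if (k : ℕ) = (j : ℕ) + 1 then 2 * ((m : ℝ) - (s : ℝ) + ((j : ℕ) : ℝ) + 2)
      else 0 := rfl

lemma paperE_eq (m s : ℕ) (j k : Fin s) (a b : ℕ) (hj : (j:ℕ) = a) (hk : (k:ℕ) = b) :
    paperE m s j k =
      if a = b then 2 * (m : ℝ) + 7 - 3 * (s : ℝ) + 3 * (a : ℝ)
      else if a = b + 1 then (s : ℝ) - (a : ℝ)
      else if b = a + 1 then 2 * ((m : ℝ) - (s : ℝ) + (a : ℝ) + 2)
      else 0 := by
  subst hj; subst hk; rfl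

lemma succAbove_one_succ {n : ℕ} (j : Fin n) :
    (((1 : Fin (n+2)).succAbove j.succ) : ℕ) = (j:ℕ) + 2 := by
  rw [val_succAbove, Fin.val_succ, Fin.val_one]
  rw [if_neg (by omega)]

lemma succAbove_one_zero {n : ℕ} :
    (((1 : Fin (n+2)).succAbove (0 : Fin (n+1))) : ℕ) = 0 := by
  rw [val_succAbove, Fin.val_zero, Fin.val_one]
  rw [if_pos (by omega)]

lemma subE1 (m n : ℕ) :
    (paperE m (n+2)).submatrix Fin.succ Fin.succ = paperE m (n+1) := by
  ext j k
  rw [Matrix.submatrix_apply,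
    paperE_eq m (n+2) _ _ ((j:ℕ)+1) ((k:ℕ)+1) (Fin.val_succ j) (Fin.val_succ k),
    paperE_apply]
  split_ifs <;> first | (push_cast; ring1) | (exfalso; first | assumption | omega)

lemma subE2 (m n : ℕ) :
    (((paperE m (n+2)).submatrix ((1 : Fin (n+2)).succAbove) Fin.succ).submatrix
      Fin.succ Fin.succ) = paperE m n := by
  ext j k
  rw [Matrix.submatrix_apply, Matrix.submatrix_apply,
    paperE_eq m (n+2) _ _ ((j:ℕ)+2) ((k:ℕ)+2) (succAbove_one_succ j)
      (by rw [Fin.val_succ, Fin.val_succ]),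
    paperE_apply]
  split_ifs <;> first | (push_cast; ring1) | (exfalso; first | assumption | omega)

lemma detN (m n : ℕ) :
    ((paperE m (n+2)).submatrix ((1 : Fin (n+2)).succAbove) Fin.succ).det
      = (2 * ((m:ℝ) - (n:ℝ))) * (paperE m n).det := by
  rw [Matrix.det_succ_row_zero, Fin.sum_univ_succ]
  have h0 : ((paperE m (n+2)).submatrix ((1 : Fin (n+2)).succAbove) Fin.succ) 0 0
      = 2 * ((m:ℝ) - (n:ℝ)) := by
    rw [Matrix.submatrix_apply,
      paperE_eq m (n+2) _ _ 0 1 succAbove_one_zero (by simp)]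
    norm_num
    push_cast; ring
  have htail : ∀ j : Fin n,
      ((paperE m (n+2)).submatrix ((1 : Fin (n+2)).succAbove) Fin.succ) 0 j.succ = 0 := by
    intro j
    rw [Matrix.submatrix_apply,
      paperE_eq m (n+2) _ _ 0 ((j:ℕ)+2) succAbove_one_zero
        (by rw [Fin.val_succ, Fin.val_succ])]
    split_ifs <;> first | rfl | (exfalso; first | assumption | omega)
  have hsum : ∑ j : Fin n, (-1:ℝ)^(((j.succ : Fin (n+1))):ℕ) *
      ((paperE m (n+2)).submatrix ((1 : Fin (n+2)).succAbove) Fin.succ) 0 j.succ *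
      (((paperE m (n+2)).submatrix ((1 : Fin (n+2)).succAbove) Fin.succ).submatrix
        Fin.succ j.succ.succAbove).det = 0 :=
    Finset.sum_eq_zero fun j _ => by rw [htail j]; ring
  rw [hsum, h0]
  have hz : ((0 : Fin (n+1)).succAbove) = Fin.succ := Fin.succAbove_zero
  rw [hz, subE2]
  simp

lemma key (m n : ℕ) :
    (paperE m (n+2)).det
      = (2*(m:ℝ) + 1 - 3*(n:ℝ)) * (paperE m (n+1)).det
        - ((n:ℝ)+1) * (2*((m:ℝ) - (n:ℝ))) * (paperE m n).det := by
  rw [Matrix.det_succ_column_zero, Fin.sum_univ_succ, Fin.sum_univ_succ]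
  have h00 : paperE m (n+2) 0 0 = 2*(m:ℝ) + 1 - 3*(n:ℝ) := by
    rw [paperE_eq m (n+2) 0 0 0 0 rfl rfl]
    norm_num
    push_cast; ring
  have h10 : paperE m (n+2) (Fin.succ 0) 0 = (n:ℝ) + 1 := by
    rw [paperE_eq m (n+2) (Fin.succ 0) 0 1 0 (by simp) rfl]
    norm_num
    push_cast; ring
  have htail : ∀ i : Fin n, paperE m (n+2) i.succ.succ 0 = 0 := by
    intro i
    rw [paperE_eq m (n+2) _ _ ((i:ℕ)+2) 0 (by rw [Fin.val_succ, Fin.val_succ]) rfl]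
    split_ifs <;> first | rfl | (exfalso; first | assumption | omega)
  have hsum : ∑ i : Fin n, (-1:ℝ)^(((i.succ.succ : Fin (n+2))):ℕ) *
      paperE m (n+2) i.succ.succ 0 *
      ((paperE m (n+2)).submatrix i.succ.succ.succAbove Fin.succ).det = 0 :=
    Finset.sum_eq_zero fun i _ => by rw [htail i]; ring
  rw [hsum, h00, h10]
  have hz : ((0 : Fin (n+2)).succAbove) = Fin.succ := Fin.succAbove_zero
  rw [hz, subE1]
  have hfs : (Fin.succ (0 : Fin (n+1))) = (1 : Fin (n+2)) := by
    apply Fin.ext; simp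
  rw [hfs, detN]
  simp
  ring

/-- `det E_m(1) = 2m + 4`, `det E_m(2) = 4(m+1)²`, and the three-term recurrence
`det E_m(s+1) = (2m + 4 - 3s)·det E_m(s) - 2s(m - s + 1)·det E_m(s-1)`
for `2 ≤ s ≤ m`. -/
theorem det_paperE_recurrence (m : ℕ) (hm : 2 ≤ m) :
    (paperE m 1).det = 2 * (m : ℝ) + 4 ∧
    (paperE m 2).det = 4 * ((m : ℝ) + 1) ^ 2 ∧
    ∀ s : ℕ, 2 ≤ s → s ≤ m →
      (paperE m (s + 1)).det =
        (2 * (m : ℝ) + 4 - 3 * (s : ℝ)) * (paperE m s).det -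
          2 * (s : ℝ) * ((m : ℝ) - (s : ℝ) + 1) * (paperE m (s - 1)).det := by
  refine ⟨?_, ?_, ?_⟩
  · rw [Matrix.det_fin_one]
    rw [paperE_eq m 1 0 0 0 0 rfl rfl]
    norm_num
    ring
  · rw [Matrix.det_fin_two]
    rw [paperE_eq m 2 0 0 0 0 rfl rfl, paperE_eq m 2 1 1 1 1 rfl rfl,
      paperE_eq m 2 0 1 0 1 rfl rfl, paperE_eq m 2 1 0 1 0 rfl rfl]
    norm_num
    ring
  · intro s hs hsm
    obtain ⟨n, rfl⟩ : ∃ n, s = n + 1 := ⟨s - 1, by omega⟩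
    have h2 : n + 1 + 1 = n + 2 := rfl
    rw [h2, key, Nat.add_sub_cancel]
    push_cast; ring
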